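/- arXiv:0710.0652 — 2 statements merged into one kernel-verified Lean document; each statement's English description precedes it below -/
import Mathlib

section
/- Let N* be a μ-generic r×r matrix over R and let λ = (λ_1,…,λ_r) = inv(D_μ·N*). Then for every 1 ≤ j ≤ r, the minor of N* using rows j, j+1, …, r and columns j, j+1, …, r has order (λ_j − μ_j) + (λ_{j+1} − μ_{j+1}) + ⋯ + (λ_r − μ_r). -/
/-!
Let `X = D_μ N*` and let `c` be the last `k = r - j + 1` indices. Multiplying a matrix by
invertible matrices cannot lower the least order of its `k × k` minors (Cauchy–Binet), so that
least order is the same for `X` and for its Smith form `D_λ`, namely `λ_j + ⋯ + λ_r`.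
Genericity puts the minimum at the corner `X_cc`: by (E3) the last columns minimise the order
of a minor of `N*` with given rows, and by (E2) the last rows minimise it after adding `|μ_I|`,
which is exactly the effect of the twist by `D_μ`. Hence
`|μ_c| + ‖N*_cc‖ = ‖X_cc‖ = λ_j + ⋯ + λ_r`.
-/

open Matrix

section Defs

variable {R : Type*} [CommRing R]

/-- The order `‖a‖` of `a ∈ R` with respect to a uniformizing parameter `t`:
the number of times `t` divides `a`, with `‖0‖ = ∞`. Valued in `ℕ∞`. -/
noncomputable def ord (t a : R) : ℕ∞ := emultiplicity t a

/-- The order of `a` as an integer (junk value `0` when the order is not finite). -/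
noncomputable def ordZ (t a : R) : ℤ := multiplicity t a

/-- `D_μ = diag(t^{μ_1}, …, t^{μ_r})` for a 1-indexed tuple `μ : ℕ → ℕ`. -/
noncomputable def Dmu (t : R) (r : ℕ) (μ : ℕ → ℕ) : Matrix (Fin r) (Fin r) R :=
  Matrix.diagonal fun i => t ^ μ (i.1 + 1)

/-- Upper triangular matrix. -/
def UpperTri {r : ℕ} (M : Matrix (Fin r) (Fin r) R) : Prop := ∀ i j : Fin r, j < i → M i j = 0

/-- Lower triangular matrix. -/
def LowerTri {r : ℕ} (M : Matrix (Fin r) (Fin r) R) : Prop := ∀ i j : Fin r, i < j → M i j = 0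

/-- `Q ∈ GL_r(R)` is `μ`-admissible iff `D_μ · Q · D_μ⁻¹` has all entries in `R`,
i.e. `D_μ · Q = P · D_μ` for some matrix `P` over `R`. -/
def MuAdmissible (t : R) (r : ℕ) (μ : ℕ → ℕ) (Q : Matrix (Fin r) (Fin r) R) : Prop :=
  IsUnit Q.det ∧ ∃ P : Matrix (Fin r) (Fin r) R, Dmu t r μ * Q = P * Dmu t r μ

/-- `inv(M) = μ`: the (1-indexed, non-increasing) invariant partition of `M`,
given by the Smith normal form `P · M · Q⁻¹ = D_μ` with `P, Q ∈ GL_r(R)`. -/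
def SmithInv (t : R) (r : ℕ) (M : Matrix (Fin r) (Fin r) R) (μ : ℕ → ℕ) : Prop :=
  (∀ i, 1 ≤ i → i < r → μ (i + 1) ≤ μ i) ∧
  ∃ P Q : Matrix (Fin r) (Fin r) R, IsUnit P.det ∧ IsUnit Q.det ∧ P * M * Q = Dmu t r μ

/-- Pair equivalence: `(M', N') = (P·M·Q⁻¹, Q·N·T⁻¹)` for some `P, Q, T ∈ GL_r(R)`. -/
def PairEquiv {r : ℕ} (M N M' N' : Matrix (Fin r) (Fin r) R) : Prop :=
  ∃ P Q T : Matrix (Fin r) (Fin r) R, IsUnit P.det ∧ IsUnit Q.det ∧ IsUnit T.det ∧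
    P * M = M' * Q ∧ Q * N = N' * T

/-- `|μ_I|` for an index set `I` (1-indexed partition `μ`, 0-indexed `Fin`). -/
def wt (r : ℕ) (μ : ℕ → ℕ) {k : ℕ} (I : Fin k → Fin r) : ℕ := ∑ s, μ ((I s).1 + 1)

/-- The columns `r-s+1, …, r` (the last `s` columns), 0-indexed. -/
def lastCols (r s : ℕ) (h : s ≤ r) : Fin s → Fin r :=
  fun p => ⟨r - s + p.1, by have := p.isLt; omega⟩

/-- The rows `1, …, s` (the first `s` rows), 0-indexed. -/
def firstRows (r s : ℕ) (h : s ≤ r) : Fin s → Fin r :=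
  fun p => ⟨p.1, lt_of_lt_of_le p.isLt h⟩

/-- The set of (1-indexed) rows `{1,…,a} ∪ {b,…,r}`, as a `Finset (Fin r)`. -/
def rowsSet (r a b : ℕ) : Finset (Fin r) :=
  Finset.univ.filter fun x => x.1 + 1 ≤ a ∨ b ≤ x.1 + 1

/-- The minor of `W` using the rows in the `Finset` `s` (in increasing order) and the
last `s.card` columns. -/
noncomputable def rsMinor {r : ℕ} (W : Matrix (Fin r) (Fin r) R) (s : Finset (Fin r)) : R :=
  (W.submatrix (fun p : Fin s.card => s.orderEmbOfFin rfl p)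
    (lastCols r s.card (by simpa using s.card_le_univ))).det

/-- Order (in `ℕ∞`) of the minor of `W` with rows `{1,…,a} ∪ {b,…,r}` and right-justified
columns. -/
noncomputable def dMinor (t : R) {r : ℕ} (W : Matrix (Fin r) (Fin r) R) (a b : ℕ) : ℕ∞ :=
  ord t (rsMinor W (rowsSet r a b))

/-- Integer-valued version of `dMinor`. -/
noncomputable def dMinorZ (t : R) {r : ℕ} (W : Matrix (Fin r) (Fin r) R) (a b : ℕ) : ℤ :=
  ordZ t (rsMinor W (rowsSet r a b))

/-- `N* = Q_U·Q_L·N·T_L·T_U` is a `μ`-generic matrix obtained from `N`. -/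
def MuGenericVia (t : R) (r : ℕ) (μ : ℕ → ℕ) (N Nstar : Matrix (Fin r) (Fin r) R) : Prop :=
  ∃ QU QL TL TU QhL QhU : Matrix (Fin r) (Fin r) R,
    Nstar = QU * QL * N * (TL * TU) ∧
    UpperTri QU ∧ MuAdmissible t r μ QU ∧
    LowerTri QL ∧ MuAdmissible t r μ QL ∧
    UpperTri TU ∧ IsUnit TU.det ∧
    (∃ (σ : Equiv.Perm (Fin r)) (L : Matrix (Fin r) (Fin r) R),
      LowerTri L ∧ TL = σ.permMatrix R * L) ∧
    IsUnit TL.det ∧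
    UpperTri (QL * N * TL) ∧
    QU * QL = QhL * QhU ∧
    LowerTri QhL ∧ MuAdmissible t r μ QhL ∧
    UpperTri QhU ∧ MuAdmissible t r μ QhU ∧
    ∀ (k : ℕ), k ≤ r → ∀ I J : Fin k → Fin r, StrictMono I → StrictMono J →
      (ord t ((QU * QL * N * (TL * TU)).submatrix I J).det =
        sInf {m : ℕ∞ | ∃ S : Fin k → Fin r, StrictMono S ∧ (∀ s, I s ≤ S s) ∧
          m = ord t ((QL * N * (TL * TU)).submatrix S J).det}) ∧
      (ord t ((QU * QL * N * (TL * TU)).submatrix I J).det =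
        sInf {m : ℕ∞ | ∃ H : Fin k → Fin r, StrictMono H ∧ (∀ s, H s ≤ I s) ∧
          m = ord t ((QhU * N * (TL * TU)).submatrix H J).det +
            ((wt r μ H - wt r μ I : ℕ) : ℕ∞)}) ∧
      (ord t ((QU * QL * N * (TL * TU)).submatrix I J).det =
        sInf {m : ℕ∞ | ∃ H : Fin k → Fin r, StrictMono H ∧ (∀ s, H s ≤ J s) ∧
          m = ord t ((QU * QL * N * TL).submatrix I H).det})

/-- `N*` is `μ`-generic: it arises from some full-rank `N` via the generic factorization. -/
def MuGeneric (t : R) (r : ℕ) (μ : ℕ → ℕ) (Nstar : Matrix (Fin r) (Fin r) R) : Prop :=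
  ∃ N : Matrix (Fin r) (Fin r) R, N.det ≠ 0 ∧ MuGenericVia t r μ N Nstar

/-- A Littlewood–Richardson filling of the skew shape `λ/μ` with content `ν`
(1-indexed triangular array `k i j`, `1 ≤ i ≤ j ≤ r`). -/
def IsLRFilling (r : ℕ) (μ ν lam : ℕ → ℕ) (k : ℕ → ℕ → ℤ) : Prop :=
  (∀ j, 1 ≤ j → j ≤ r → (μ j : ℤ) + ∑ s ∈ Finset.Icc 1 j, k s j = (lam j : ℤ)) ∧
  (∀ i, 1 ≤ i → i ≤ r → ∑ s ∈ Finset.Icc i r, k i s = (ν i : ℤ)) ∧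
  (∀ i j, 1 ≤ i → i ≤ j → j ≤ r → 0 ≤ k i j) ∧
  (∀ i j, 2 ≤ j → j ≤ r → 1 ≤ i → i ≤ j →
    (μ j : ℤ) + ∑ s ∈ Finset.Icc 1 i, k s j ≤
      (μ (j - 1) : ℤ) + ∑ s ∈ Finset.Icc 1 (i - 1), k s (j - 1)) ∧
  (∀ i j, 1 ≤ i → i ≤ r - 1 → i ≤ j → j ≤ r - 1 →
    ∑ s ∈ Finset.Icc (i + 1) (j + 1), k (i + 1) s ≤ ∑ s ∈ Finset.Icc i j, k i s)

/-- The determinantal formula defining the integers `k i j` from a `μ`-generic matrix: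
`k_{1j} + ⋯ + k_{ij} = ‖N*(rows {1,…,j−i−1} ∪ {j,…,r})‖ − ‖N*(rows {1,…,j−i} ∪ {j+1,…,r})‖`. -/
def DetFormula (t : R) {r : ℕ} (Nstar : Matrix (Fin r) (Fin r) R) (k : ℕ → ℕ → ℤ) : Prop :=
  ∀ i j, 1 ≤ i → i ≤ j → j ≤ r →
    ∑ s ∈ Finset.Icc 1 i, k s j =
      dMinorZ t Nstar (j - i - 1) j - dMinorZ t Nstar (j - i) (j + 1)

end Defs

section Minors

variable {S : Type*} [CommRing S]

theorem det_submatrix_mul_eq_sum_left {l m n : Type*} [Fintype m] {k : ℕ}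
    (A : Matrix l m S) (B : Matrix m n S) (I : Fin k → l) (J : Fin k → n) :
    ((A * B).submatrix I J).det
      = ∑ φ : Fin k → m, (∏ i, A (I i) (φ i)) * (B.submatrix φ J).det := by
  have hrows : (A * B).submatrix I J = fun i => ∑ a : m, A (I i) a • fun j => B a (J j) := by
    funext i j
    simp [Matrix.mul_apply, Finset.sum_apply]
  change detRowAlternating.toMultilinearMap ((A * B).submatrix I J) = _
  rw [hrows, MultilinearMap.map_sum]
  refine Finset.sum_congr rfl fun φ _ => ?_
  rw [MultilinearMap.map_smul_univ, smul_eq_mul]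
  rfl

theorem det_submatrix_mul_eq_sum_right {l m n : Type*} [Fintype m] {k : ℕ}
    (A : Matrix l m S) (B : Matrix m n S) (I : Fin k → l) (J : Fin k → n) :
    ((A * B).submatrix I J).det
      = ∑ ψ : Fin k → m, (∏ i, B (ψ i) (J i)) * (A.submatrix I ψ).det := by
  rw [← det_transpose, transpose_submatrix, transpose_mul, det_submatrix_mul_eq_sum_left]
  refine Finset.sum_congr rfl fun ψ _ => ?_
  rw [← det_transpose (A.submatrix I ψ), transpose_submatrix]
  rfl

theorem dvd_det_submatrix_mul_mul {l m n o : Type*} [Fintype m] [Fintype n] {k : ℕ} {d : S}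
    {B : Matrix m n S} (hB : ∀ φ : Fin k → m, ∀ ψ : Fin k → n, d ∣ (B.submatrix φ ψ).det)
    (A : Matrix l m S) (C : Matrix n o S) (I : Fin k → l) (J : Fin k → o) :
    d ∣ ((A * B * C).submatrix I J).det := by
  rw [det_submatrix_mul_eq_sum_right]
  refine Finset.dvd_sum fun ψ _ => Dvd.dvd.mul_left ?_ _
  rw [det_submatrix_mul_eq_sum_left]
  exact Finset.dvd_sum fun φ _ => Dvd.dvd.mul_left (hB φ ψ) _

/-- Reordering rows and columns only changes a minor by a sign, and repeated indices kill it. -/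
theorem dvd_det_submatrix_of_strictMono {m n : Type*} [LinearOrder m] [LinearOrder n] {k : ℕ}
    {d : S} {B : Matrix m n S}
    (hB : ∀ I : Fin k → m, ∀ J : Fin k → n, StrictMono I → StrictMono J →
      d ∣ (B.submatrix I J).det)
    (φ : Fin k → m) (ψ : Fin k → n) : d ∣ (B.submatrix φ ψ).det := by
  by_cases hφ : Function.Injective φ
  swap
  · obtain ⟨a, b, hab, hne⟩ := Function.not_injective_iff.mp hφ
    rw [det_zero_of_row_eq hne (funext fun q => by simp [hab])]
    exact dvd_zero d
  by_cases hψ : Function.Injective ψ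
  swap
  · obtain ⟨a, b, hab, hne⟩ := Function.not_injective_iff.mp hψ
    rw [det_zero_of_column_eq hne (fun i => by simp [hab])]
    exact dvd_zero d
  set σ := Tuple.sort φ
  set τ := Tuple.sort ψ
  have hsub : B.submatrix φ ψ
      = ((B.submatrix (φ ∘ σ) (ψ ∘ τ)).submatrix id τ.symm).submatrix σ.symm id := by
    ext p q
    simp
  rw [hsub, det_permute, det_permute']
  exact Dvd.dvd.mul_left (Dvd.dvd.mul_left (hB _ _
    ((Tuple.monotone_sort φ).strictMono_of_injective (hφ.comp σ.injective))
    ((Tuple.monotone_sort ψ).strictMono_of_injective (hψ.comp τ.injective))) _) _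

end Minors

section Weights

theorem antitoneOn_Icc_of_succ_le {f : ℕ → ℕ} {r : ℕ}
    (hf : ∀ i, 1 ≤ i → i < r → f (i + 1) ≤ f i) : AntitoneOn f (Set.Icc 1 r) :=
  antitoneOn_of_succ_le Set.ordConnected_Icc fun a _ ha hsucc =>
    hf a ha.1 (Order.succ_le_iff.mp hsucc.2)

theorem wt_le_wt_of_le {r k : ℕ} {f : ℕ → ℕ} (hf : AntitoneOn f (Set.Icc 1 r))
    {S H : Fin k → Fin r} (h : ∀ p, H p ≤ S p) : wt r f S ≤ wt r f H :=
  Finset.sum_le_sum fun p _ =>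
    hf ⟨by omega, (H p).isLt⟩ ⟨by omega, (S p).isLt⟩ (Nat.succ_le_succ (h p))

theorem lastCols_strictMono {r k : ℕ} (hk : k ≤ r) : StrictMono (lastCols r k hk) :=
  fun a b hab => by simp only [lastCols, Fin.mk_lt_mk]; omega

/-- `S` maps the `k - 1 - p` indices above `p` injectively above `S p`. -/
theorem le_lastCols_of_strictMono {r k : ℕ} (hk : k ≤ r) {S : Fin k → Fin r}
    (hS : StrictMono S) (p : Fin k) : S p ≤ lastCols r k hk p := by
  have hcard : (Finset.Ioi p).card ≤ (Finset.Ioi (S p)).card :=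
    Finset.card_le_card_of_injOn S (fun q hq => by simpa using hS (by simpa using hq))
      hS.injective.injOn
  rw [Fin.card_Ioi, Fin.card_Ioi] at hcard
  have := (S p).isLt
  simp only [lastCols, Fin.le_def]
  omega

theorem wt_lastCols_le {r k : ℕ} (hk : k ≤ r) {f : ℕ → ℕ} (hf : AntitoneOn f (Set.Icc 1 r))
    {S : Fin k → Fin r} (hS : StrictMono S) : wt r f (lastCols r k hk) ≤ wt r f S :=
  wt_le_wt_of_le hf (le_lastCols_of_strictMono hk hS)

end Weights

section Dmu

variable {R : Type*} [CommRing R]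

theorem det_submatrix_Dmu_mul {n : Type*} (t : R) {r k : ℕ} (μ : ℕ → ℕ)
    (W : Matrix (Fin r) n R) (I : Fin k → Fin r) (J : Fin k → n) :
    ((Dmu t r μ * W).submatrix I J).det = t ^ wt r μ I * (W.submatrix I J).det := by
  have : (Dmu t r μ * W).submatrix I J
      = diagonal (fun p => t ^ μ ((I p).1 + 1)) * W.submatrix I J := by
    ext p q
    simp [Dmu, diagonal_mul]
  rw [this, det_mul, det_diagonal, Finset.prod_pow_eq_pow_sum]
  rfl

theorem pow_wt_lastCols_dvd_det_submatrix_Dmu (t : R) {r k : ℕ} (hk : k ≤ r) {lam : ℕ → ℕ}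
    (hlam : AntitoneOn lam (Set.Icc 1 r)) (φ ψ : Fin k → Fin r) :
    t ^ wt r lam (lastCols r k hk) ∣ ((Dmu t r lam).submatrix φ ψ).det :=
  dvd_det_submatrix_of_strictMono (fun I J hI _ => by
    rw [← mul_one (Dmu t r lam), det_submatrix_Dmu_mul]
    exact (pow_dvd_pow t (wt_lastCols_le hk hlam hI)).mul_right _) φ ψ

end Dmu

section Order

variable {R : Type*} [CommRing R] [IsDomain R] {t : R}

theorem ord_pow_mul (hp : Prime t) (n : ℕ) (a : R) : ord t (t ^ n * a) = n + ord t a := by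
  rw [ord, emultiplicity_mul hp, emultiplicity_pow_self_of_prime hp]
  rfl

/-- The least order of a `k × k` minor is a Smith invariant, and for `D_λ` it is attained at
the corner. -/
theorem ord_det_submatrix_eq_wt_lastCols_of_minimal (hp : Prime t) {r k : ℕ} (hk : k ≤ r)
    {lam : ℕ → ℕ} (hlam : AntitoneOn lam (Set.Icc 1 r)) {X P Q : Matrix (Fin r) (Fin r) R}
    (hP : IsUnit P.det) (hQ : IsUnit Q.det) (hPXQ : P * X * Q = Dmu t r lam)
    {I J : Fin k → Fin r}
    (hmin : ∀ S H : Fin k → Fin r, StrictMono S → StrictMono H →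
      ord t (X.submatrix I J).det ≤ ord t (X.submatrix S H).det) :
    ord t (X.submatrix I J).det = wt r lam (lastCols r k hk) := by
  set c := lastCols r k hk
  apply le_antisymm
  · by_contra! hlt
    have hX : ∀ φ ψ : Fin k → Fin r, t ^ (wt r lam c + 1) ∣ (X.submatrix φ ψ).det :=
      dvd_det_submatrix_of_strictMono fun S H hS hH => pow_dvd_of_le_emultiplicity <| by
        push_cast
        exact (Order.add_one_le_of_lt hlt).trans (hmin S H hS hH)
    have hcorner := dvd_det_submatrix_mul_mul hX P Q c c
    rw [hPXQ, ← mul_one (Dmu t r lam), det_submatrix_Dmu_mul,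
      submatrix_one _ (lastCols_strictMono hk).injective, det_one, mul_one,
      pow_dvd_pow_iff hp.ne_zero hp.not_isUnit] at hcorner
    omega
  · have hX : X = P⁻¹ * Dmu t r lam * Q⁻¹ := by
      rw [← hPXQ, ← mul_assoc, ← mul_assoc, nonsing_inv_mul P hP, one_mul, mul_assoc,
        mul_nonsing_inv Q hQ, mul_one]
    rw [hX]
    exact le_emultiplicity_of_pow_dvd <|
      dvd_det_submatrix_mul_mul (pow_wt_lastCols_dvd_det_submatrix_Dmu t hk hlam) _ _ I J

end Order

section Generic

variable {R : Type*} [CommRing R] {t : R} {r k : ℕ}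

/-- Condition (E2) of `μ`-genericity for the `k × k` minors of `W`, with `Y = Q̂_U N T⁻¹`. -/
def GenericE2 (t : R) (μ : ℕ → ℕ) (k : ℕ) (W Y : Matrix (Fin r) (Fin r) R) : Prop :=
  ∀ I J : Fin k → Fin r, StrictMono I → StrictMono J →
    ord t (W.submatrix I J).det =
      sInf {m : ℕ∞ | ∃ H : Fin k → Fin r, StrictMono H ∧ (∀ s, H s ≤ I s) ∧
        m = ord t (Y.submatrix H J).det + ((wt r μ H - wt r μ I : ℕ) : ℕ∞)}

/-- Condition (E3) of `μ`-genericity for the `k × k` minors of `W`, with `Z = Q N T_L`. -/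
def GenericE3 (t : R) (k : ℕ) (W Z : Matrix (Fin r) (Fin r) R) : Prop :=
  ∀ I J : Fin k → Fin r, StrictMono I → StrictMono J →
    ord t (W.submatrix I J).det =
      sInf {m : ℕ∞ | ∃ H : Fin k → Fin r, StrictMono H ∧ (∀ s, H s ≤ J s) ∧
        m = ord t (Z.submatrix I H).det}

theorem ord_det_submatrix_lastCols_le (hk : k ≤ r) {W Z : Matrix (Fin r) (Fin r) R}
    (hE3 : GenericE3 t k W Z)
    {S H : Fin k → Fin r} (hS : StrictMono S) (hH : StrictMono H) :
    ord t (W.submatrix S (lastCols r k hk)).det ≤ ord t (W.submatrix S H).det := by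
  rw [hE3 S _ hS (lastCols_strictMono hk), hE3 S H hS hH]
  refine sInf_le_sInf ?_
  rintro m ⟨H', hH', -, rfl⟩
  exact ⟨H', hH', le_lastCols_of_strictMono hk hH', rfl⟩

theorem wt_add_ord_det_submatrix_lastCols_le (hk : k ≤ r) {μ : ℕ → ℕ}
    (hμ : AntitoneOn μ (Set.Icc 1 r)) {W Y : Matrix (Fin r) (Fin r) R}
    (hE2 : GenericE2 t μ k W Y)
    {S : Fin k → Fin r} (hS : StrictMono S) :
    wt r μ (lastCols r k hk) + ord t (W.submatrix (lastCols r k hk) (lastCols r k hk)).det ≤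
      wt r μ S + ord t (W.submatrix S (lastCols r k hk)).det := by
  set c := lastCols r k hk
  have hc : StrictMono c := lastCols_strictMono hk
  obtain ⟨H, hH, hHS, hWS⟩ : ord t (W.submatrix S c).det ∈ {m : ℕ∞ | ∃ H : Fin k → Fin r,
      StrictMono H ∧ (∀ s, H s ≤ S s) ∧
        m = ord t (Y.submatrix H c).det + ((wt r μ H - wt r μ S : ℕ) : ℕ∞)} := by
    rw [hE2 S c hS hc]
    exact csInf_mem ⟨_, S, hS, fun _ => le_rfl, rfl⟩
  have hHc : ∀ s, H s ≤ c s := fun s => (hHS s).trans (le_lastCols_of_strictMono hk hS s)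
  have hWc : ord t (W.submatrix c c).det ≤
      ord t (Y.submatrix H c).det + ((wt r μ H - wt r μ c : ℕ) : ℕ∞) := by
    rw [hE2 c c hc hc]
    exact sInf_le ⟨H, hH, hHc, rfl⟩
  calc (wt r μ c : ℕ∞) + ord t (W.submatrix c c).det
      ≤ wt r μ c + (ord t (Y.submatrix H c).det + ((wt r μ H - wt r μ c : ℕ) : ℕ∞)) := by
        gcongr
    _ = wt r μ S + ord t (W.submatrix S c).det := by
        rw [hWS, add_left_comm, ← Nat.cast_add, Nat.add_sub_cancel' (wt_le_wt_of_le hμ hHc),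
          add_left_comm, ← Nat.cast_add, Nat.add_sub_cancel' (wt_le_wt_of_le hμ hHS)]

theorem ord_det_submatrix_Dmu_mul_lastCols_le [IsDomain R] (hp : Prime t) (hk : k ≤ r)
    {μ : ℕ → ℕ} (hμ : AntitoneOn μ (Set.Icc 1 r)) {W Y Z : Matrix (Fin r) (Fin r) R}
    (hE2 : GenericE2 t μ k W Y)
    (hE3 : GenericE3 t k W Z)
    {S H : Fin k → Fin r} (hS : StrictMono S) (hH : StrictMono H) :
    ord t ((Dmu t r μ * W).submatrix (lastCols r k hk) (lastCols r k hk)).det ≤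
      ord t ((Dmu t r μ * W).submatrix S H).det := by
  rw [det_submatrix_Dmu_mul, det_submatrix_Dmu_mul, ord_pow_mul hp, ord_pow_mul hp]
  exact (wt_add_ord_det_submatrix_lastCols_le hk hμ hE2 hS).trans
    (by gcongr; exact ord_det_submatrix_lastCols_le hk hE3 hS hH)

end Generic

section Corner

variable {R : Type*} [CommRing R] {r j : ℕ}

theorem rowsSet_zero_eq_Ici (hj1 : 1 ≤ j) (hjr : j ≤ r) :
    rowsSet r 0 j = Finset.Ici ⟨j - 1, by omega⟩ := by
  ext x
  simp only [rowsSet, Finset.mem_filter, Finset.mem_univ, true_and, Finset.mem_Ici, Fin.le_def]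
  omega

theorem card_rowsSet_zero_add (hj1 : 1 ≤ j) (hjr : j ≤ r) :
    (rowsSet r 0 j).card + j = r + 1 := by
  rw [rowsSet_zero_eq_Ici hj1 hjr, Fin.card_Ici]
  change r - (j - 1) + j = r + 1
  omega

theorem dMinor_zero_eq (t : R) (W : Matrix (Fin r) (Fin r) R) (hj1 : 1 ≤ j) (hjr : j ≤ r)
    (hk : (rowsSet r 0 j).card ≤ r) :
    dMinor t W 0 j = ord t (W.submatrix (lastCols r _ hk) (lastCols r _ hk)).det := by
  have hcard := card_rowsSet_zero_add hj1 hjr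
  have hrows : ⇑((rowsSet r 0 j).orderEmbOfFin rfl) = lastCols r _ hk := by
    refine (Finset.orderEmbOfFin_unique rfl (fun p => ?_) (lastCols_strictMono hk)).symm
    refine Finset.mem_filter.mpr ⟨Finset.mem_univ _, Or.inr ?_⟩
    simp only [lastCols]
    omega
  rw [dMinor, rsMinor, hrows]

theorem sum_Icc_eq_wt_lastCols (f : ℕ → ℕ) {k : ℕ} (hk : k ≤ r) (hkj : k + j = r + 1) :
    ∑ i ∈ Finset.Icc j r, f i = wt r f (lastCols r k hk) := by
  rw [← Finset.Ico_add_one_right_eq_Icc, show r + 1 = j + k by omega,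
    Finset.sum_Ico_eq_sum_range, Nat.add_sub_cancel_left,
    ← Fin.sum_univ_eq_sum_range (fun p => f (j + p)), wt]
  refine Finset.sum_congr rfl fun p _ => congrArg f ?_
  simp only [lastCols]
  omega

end Corner

theorem stmt10_general {R : Type*} [CommRing R] [IsDomain R] [IsDiscreteValuationRing R]
    (t : R) (ht : Irreducible t) (r : ℕ) (μ : ℕ → ℕ)
    (hμ : ∀ i, 1 ≤ i → i < r → μ (i + 1) ≤ μ i)
    (Nstar : Matrix (Fin r) (Fin r) R) (hgen : MuGeneric t r μ Nstar)
    (lam : ℕ → ℕ) (hlam : SmithInv t r (Dmu t r μ * Nstar) lam)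
    (j : ℕ) (hj1 : 1 ≤ j) (hjr : j ≤ r) :
    dMinor t Nstar 0 j + ((∑ i ∈ Finset.Icc j r, μ i : ℕ) : ℕ∞) =
      ((∑ i ∈ Finset.Icc j r, lam i : ℕ) : ℕ∞) := by
  obtain ⟨hlam_anti, P, Q, hP, hQ, hPXQ⟩ := hlam
  obtain ⟨N, -, QU, QL, TL, TU, -, QhU, rfl, -, -, -, -, -, -, -, -, -, -, -, -, -, -, hE⟩ := hgen
  have hk := card_rowsSet_zero_add hj1 hjr
  have hkr : (rowsSet r 0 j).card ≤ r := by omega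
  have hcorner := ord_det_submatrix_eq_wt_lastCols_of_minimal ht.prime hkr
    (antitoneOn_Icc_of_succ_le hlam_anti) hP hQ hPXQ fun S H hS hH =>
      ord_det_submatrix_Dmu_mul_lastCols_le ht.prime hkr (antitoneOn_Icc_of_succ_le hμ)
        (fun I J hI hJ => (hE _ hkr I J hI hJ).2.1) (fun I J hI hJ => (hE _ hkr I J hI hJ).2.2)
        hS hH
  rw [det_submatrix_Dmu_mul, ord_pow_mul ht.prime] at hcorner
  rw [dMinor_zero_eq t _ hj1 hjr hkr, sum_Icc_eq_wt_lastCols μ hkr hk,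
    sum_Icc_eq_wt_lastCols lam hkr hk, add_comm, hcorner]

theorem stmt10 {R : Type*} [CommRing R] [IsDomain R] [IsDiscreteValuationRing R]
    [CharZero (IsLocalRing.ResidueField R)]
    (t : R) (ht : Irreducible t) (r : ℕ) (μ : ℕ → ℕ)
    (hμ : ∀ i, 1 ≤ i → i < r → μ (i + 1) ≤ μ i)
    (Nstar : Matrix (Fin r) (Fin r) R) (hgen : MuGeneric t r μ Nstar)
    (lam : ℕ → ℕ) (hlam : SmithInv t r (Dmu t r μ * Nstar) lam)
    (j : ℕ) (hj1 : 1 ≤ j) (hjr : j ≤ r) :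
    dMinor t Nstar 0 j + ((∑ i ∈ Finset.Icc j r, μ i : ℕ) : ℕ∞) =
      ((∑ i ∈ Finset.Icc j r, lam i : ℕ) : ℕ∞) :=
  stmt10_general t ht r μ hμ Nstar hgen lam hlam j hj1 hjr
end

section
/- Let N* and N̂* be μ-generic r×r matrices over R such that the pairs (D_μ, N*) and (D_μ, N̂*) are pair equivalent. Then the Littlewood–Richardson fillings computed from N* and from N̂* via the determinantal formula coincide: for all 1 ≤ i ≤ j ≤ r, k_{ij} computed from N* equals k_{ij} computed from N̂*. In particular, pairs of full-rank matrices in the same GL_r(R)^3-orbit yield identical Littlewood–Richardson fillings. -/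
open Matrix

/-!
Write `N̂* = Q·N*·T⁻¹`. From `P·D_μ = D_μ·Q`, `t ^ (μ_j - μ_i)⁺` divides `Q i j`. Expand a
right-justified minor of `Q·(N*·T⁻¹)` along its rows as a sum over row selections `H ∘ σ` with `H`
increasing. The column-side expansion together with (E3) shows `‖N*_{H,·}‖ ≤ ‖(N*·T⁻¹)_{H,·}‖`.
With `L = min(I, H)`, (E2) and then (E1) give
`‖N*_{I,·}‖ ≤ ‖N*_{L,·}‖ + |μ_L| - |μ_I| ≤ ‖N*_{H,·}‖ + ∑ₛ (μ_{H s} - μ_{I s})⁺`,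
and by the rearrangement inequality this sum is at most the order of the coefficient
`∏ₛ Q_{I s, H (σ s)}`. So the orders of right-justified minors can only grow along a pair
equivalence. By symmetry they are invariant, and the determinantal formula expresses every
`k i j` through them.
-/

section Ord

variable {R : Type*} [CommRing R]

lemma le_ord_sum {ι : Type*} {t : R} {c : ℕ∞} (s : Finset ι) (f : ι → R)
    (h : ∀ i ∈ s, c ≤ ord t (f i)) : c ≤ ord t (∑ i ∈ s, f i) := by
  induction s using Finset.cons_induction with
  | empty => simp [ord, emultiplicity_zero]
  | cons i s _ ih =>
    rw [Finset.sum_cons]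
    exact (le_min (h i (Finset.mem_cons_self i s))
      (ih fun j hj => h j (Finset.mem_cons_of_mem hj))).trans min_le_emultiplicity_add

lemma ord_add_ord_le_ord_mul (t a b : R) : ord t a + ord t b ≤ ord t (a * b) := by
  induction ha : ord t a using ENat.recTopCoe with
  | top =>
    rw [top_add, ← ha]
    exact emultiplicity_le_emultiplicity_of_dvd_right (dvd_mul_right a b)
  | coe m =>
    induction hb : ord t b using ENat.recTopCoe with
    | top =>
      rw [add_top, ← hb]
      exact emultiplicity_le_emultiplicity_of_dvd_right (dvd_mul_left b a)
    | coe n =>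
      refine le_emultiplicity_of_pow_dvd ?_
      rw [pow_add]
      exact mul_dvd_mul (pow_dvd_of_le_emultiplicity ha.ge) (pow_dvd_of_le_emultiplicity hb.ge)

end Ord

lemma sum_tsub_le_sum_comp_perm_tsub {ι : Type*} [Fintype ι] [LinearOrder ι] {a b : ι → ℕ}
    (ha : Antitone a) (hb : Antitone b) (σ : Equiv.Perm ι) :
    ∑ i, (a i - b i) ≤ ∑ i, (a (σ i) - b i) := by
  classical
  -- `u - v = #{m | v ≤ m < u}`: this reduces the claim to the rearrangement inequality for the
  -- indicators of `m < a i` and `b i ≤ m`, which antivary.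
  set K := ∑ i, a i
  have layer : ∀ u v, u ≤ K →
      u - v = ∑ m ∈ Finset.range K, (if m < u then 1 else 0) * (if m < v then 0 else 1) := by
    intro u v hu
    have hind : ∀ m, ((if m < u then 1 else 0) * (if m < v then 0 else 1) : ℕ)
        = if m ∈ Finset.Ico v u then 1 else 0 := by
      intro m
      simp only [Finset.mem_Ico]
      split_ifs <;> omega
    rw [Finset.sum_congr rfl fun m _ => hind m, Finset.sum_ite_mem,
      Finset.inter_eq_right.2 (fun m hm => by simp at hm ⊢; omega)]
    simp
  have haK : ∀ i, a i ≤ K := fun i => Finset.single_le_sum (fun j _ => Nat.zero_le (a j))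
    (Finset.mem_univ i)
  rw [Finset.sum_congr rfl fun i _ => layer _ (b i) (haK i),
    Finset.sum_congr rfl fun i _ => layer _ (b i) (haK (σ i))]
  conv_lhs => rw [Finset.sum_comm]
  conv_rhs => rw [Finset.sum_comm]
  refine Finset.sum_le_sum fun m _ => ?_
  refine Antivary.sum_mul_le_sum_comp_perm_mul (f := fun i => if m < a i then 1 else 0)
    (g := fun i => if m < b i then 0 else 1) (Antitone.antivary ?_ ?_)
  · intro i j hij
    have := ha hij
    dsimp only
    split_ifs <;> omega
  · intro i j hij
    have := hb hij
    dsimp only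
    split_ifs <;> omega

lemma antitone_fin_of_succ_le {r : ℕ} {μ : ℕ → ℕ} (hμ : ∀ i, 1 ≤ i → i < r → μ (i + 1) ≤ μ i) :
    Antitone fun s : Fin r => μ (s.1 + 1) := by
  intro a b hab
  have key : ∀ m, a.1 ≤ m → m < r → μ (m + 1) ≤ μ (a.1 + 1) := by
    intro m hm
    induction m, hm using Nat.le_induction with
    | base => exact fun _ => le_rfl
    | succ m hm ih => exact fun hmr => (hμ (m + 1) (by omega) hmr).trans (ih (by omega))
  exact key b.1 hab b.2

section Minors

variable {R : Type*} [CommRing R] {m : Type*} [Fintype m] {n : ℕ}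

lemma det_submatrix_mul_eq_sum (A B : Matrix m m R) (I J : Fin n → m) :
    ((A * B).submatrix I J).det
      = ∑ g : Fin n → m, (∏ x, A (I x) (g x)) * (B.submatrix g J).det := by
  have hrows : A.submatrix I id * B.submatrix id J
      = fun x => ∑ h : m, A (I x) h • fun y => B h (J y) := by
    funext x y
    simp [Matrix.mul_apply]
  rw [Matrix.submatrix_mul A B I id J Function.bijective_id, hrows]
  change Matrix.detRowAlternating.toMultilinearMap _ = _
  rw [MultilinearMap.map_sum]
  refine Finset.sum_congr rfl fun g _ => ?_
  exact (MultilinearMap.map_smul_univ _ (fun x => A (I x) (g x)) _).trans (smul_eq_mul _ _)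

lemma le_ord_det_submatrix_mul [LinearOrder m] {t : R} {c : ℕ∞} {A B : Matrix m m R}
    {I J : Fin n → m}
    (h : ∀ (H : Fin n → m) (σ : Equiv.Perm (Fin n)), StrictMono H →
      c ≤ ord t ((∏ x, A (I x) (H (σ x))) * (B.submatrix H J).det)) :
    c ≤ ord t ((A * B).submatrix I J).det := by
  rw [det_submatrix_mul_eq_sum]
  refine le_ord_sum _ _ fun g _ => ?_
  by_cases hg : Function.Injective g
  · set σ := Tuple.sort g
    have hH : StrictMono (g ∘ σ) :=
      (Tuple.monotone_sort g).strictMono_of_injective (hg.comp σ.injective)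
    have hdet : (B.submatrix g J).det
        = Equiv.Perm.sign σ.symm * (B.submatrix (g ∘ σ) J).det := by
      rw [← Matrix.det_permute, Matrix.submatrix_submatrix]
      simp [Function.comp_def]
    refine (h (g ∘ σ) σ.symm hH).trans (emultiplicity_le_emultiplicity_of_dvd_right ?_)
    simp only [Function.comp_apply, Equiv.apply_symm_apply, hdet]
    exact mul_dvd_mul_left _ (dvd_mul_left _ _)
  · obtain ⟨x, y, hxy, hne⟩ := Function.not_injective_iff.1 hg
    rw [Matrix.det_zero_of_row_eq hne (by funext z; simp [hxy]), mul_zero]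
    simp [ord, emultiplicity_zero]

end Minors

section Weight

variable {r n : ℕ} {μ : ℕ → ℕ}

lemma wt_le_wt (hμ : Antitone fun s : Fin r => μ (s.1 + 1)) {I L : Fin n → Fin r}
    (hLI : ∀ s, L s ≤ I s) : wt r μ I ≤ wt r μ L :=
  Finset.sum_le_sum fun s _ => hμ (hLI s)

lemma wt_min_sub_wt (hμ : Antitone fun s : Fin r => μ (s.1 + 1)) (I H : Fin n → Fin r) :
    wt r μ (fun s => min (I s) (H s)) - wt r μ I
      = ∑ s, (μ ((H s).1 + 1) - μ ((I s).1 + 1)) := by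
  have hmax : ∀ s, μ ((min (I s) (H s)).1 + 1)
      = μ ((I s).1 + 1) + (μ ((H s).1 + 1) - μ ((I s).1 + 1)) := by
    intro s
    rw [show μ ((min (I s) (H s)).1 + 1) = max (μ ((I s).1 + 1)) (μ ((H s).1 + 1)) from
      hμ.map_min]
    omega
  rw [wt, wt, Finset.sum_congr rfl fun s _ => hmax s, Finset.sum_add_distrib,
    Nat.add_sub_cancel_left]

end Weight

lemma le_lastCols {r n : ℕ} (hn : n ≤ r) {J : Fin n → Fin r} (hJ : StrictMono J) (s : Fin n) :
    J s ≤ lastCols r n hn s := by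
  have hcard := Finset.card_le_card_of_injOn (s := Finset.Ici s) (t := Finset.Ici (J s)) J
    (fun x hx => by simpa using hJ.monotone (Finset.mem_Ici.1 hx)) hJ.injective.injOn
  simp only [Fin.card_Ici] at hcard
  simp only [lastCols, Fin.le_def]
  omega

lemma lastCols_strictMono_s18 {r n : ℕ} (hn : n ≤ r) : StrictMono (lastCols r n hn) :=
  fun _ _ hpq => Nat.add_lt_add_left hpq _

namespace MuGeneric

variable {R : Type*} [CommRing R] {t : R} {r n : ℕ} {μ : ℕ → ℕ} {W : Matrix (Fin r) (Fin r) R}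

lemma ord_det_submatrix_le_of_le (hW : MuGeneric t r μ W) (hn : n ≤ r)
    {I I' J : Fin n → Fin r} (hI : StrictMono I) (hI' : StrictMono I') (hJ : StrictMono J)
    (hII' : ∀ s, I s ≤ I' s) :
    ord t (W.submatrix I J).det ≤ ord t (W.submatrix I' J).det := by
  obtain ⟨N, -, QU, QL, TL, TU, QhL, QhU, rfl, -, -, -, -, -, -, -, -, -, -, -, -, -, -, hE⟩ := hW
  rw [(hE n hn I J hI hJ).1, (hE n hn I' J hI' hJ).1]
  refine sInf_le_sInf ?_
  rintro m ⟨S, hS, hI'S, rfl⟩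
  exact ⟨S, hS, fun s => (hII' s).trans (hI'S s), rfl⟩

lemma ord_det_submatrix_le_add_wt (hW : MuGeneric t r μ W)
    (hμ : Antitone fun s : Fin r => μ (s.1 + 1)) (hn : n ≤ r)
    {I L J : Fin n → Fin r} (hI : StrictMono I) (hL : StrictMono L) (hJ : StrictMono J)
    (hLI : ∀ s, L s ≤ I s) :
    ord t (W.submatrix I J).det ≤ ord t (W.submatrix L J).det + (wt r μ L - wt r μ I : ℕ) := by
  obtain ⟨N, -, QU, QL, TL, TU, QhL, QhU, rfl, -, -, -, -, -, -, -, -, -, -, -, -, -, -, hE⟩ := hW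
  rw [(hE n hn I J hI hJ).2.1, (hE n hn L J hL hJ).2.1, ENat.sInf_add]
  refine le_iInf₂ fun m ⟨H, hH, hHL, hm⟩ => sInf_le ⟨H, hH, fun s => (hHL s).trans (hLI s), ?_⟩
  have hwLI := wt_le_wt hμ hLI
  have hwHL := wt_le_wt hμ hHL
  rw [hm, add_assoc, ← Nat.cast_add]
  congr 2
  omega

lemma ord_det_submatrix_lastCols_le (hW : MuGeneric t r μ W) (hn : n ≤ r)
    {I J : Fin n → Fin r} (hI : StrictMono I) (hJ : StrictMono J) :
    ord t (W.submatrix I (lastCols r n hn)).det ≤ ord t (W.submatrix I J).det := by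
  obtain ⟨N, -, QU, QL, TL, TU, QhL, QhU, rfl, -, -, -, -, -, -, -, -, -, -, -, -, -, -, hE⟩ := hW
  rw [(hE n hn I J hI hJ).2.2, (hE n hn I _ hI (lastCols_strictMono_s18 hn)).2.2]
  refine sInf_le_sInf ?_
  rintro m ⟨H, hH, hHJ, rfl⟩
  exact ⟨H, hH, fun s => (hHJ s).trans (le_lastCols hn hJ s), rfl⟩

lemma ord_det_submatrix_lastCols_le_mul_right (hW : MuGeneric t r μ W) (hn : n ≤ r)
    (C : Matrix (Fin r) (Fin r) R) {H : Fin n → Fin r} (hH : StrictMono H) :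
    ord t (W.submatrix H (lastCols r n hn)).det
      ≤ ord t ((W * C).submatrix H (lastCols r n hn)).det := by
  rw [← Matrix.det_transpose ((W * C).submatrix _ _), Matrix.transpose_submatrix,
    Matrix.transpose_mul]
  refine le_ord_det_submatrix_mul fun L σ hL => ?_
  rw [← Matrix.transpose_submatrix, Matrix.det_transpose]
  exact (hW.ord_det_submatrix_lastCols_le hn hH hL).trans
    (emultiplicity_le_emultiplicity_of_dvd_right (dvd_mul_left _ _))

lemma ord_det_submatrix_lastCols_le_mul (hW : MuGeneric t r μ W)
    (hμ : Antitone fun s : Fin r => μ (s.1 + 1)) (hn : n ≤ r) {Q : Matrix (Fin r) (Fin r) R}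
    (hQ : ∀ i j : Fin r, t ^ (μ (j.1 + 1) - μ (i.1 + 1)) ∣ Q i j) (C : Matrix (Fin r) (Fin r) R)
    {I : Fin n → Fin r} (hI : StrictMono I) :
    ord t (W.submatrix I (lastCols r n hn)).det
      ≤ ord t ((Q * W * C).submatrix I (lastCols r n hn)).det := by
  rw [mul_assoc]
  refine le_ord_det_submatrix_mul fun H σ hH => ?_
  set J₀ := lastCols r n hn
  set L : Fin n → Fin r := fun s => min (I s) (H s)
  have hL : StrictMono L := fun p q hpq =>
    lt_min ((min_le_left _ _).trans_lt (hI hpq)) ((min_le_right _ _).trans_lt (hH hpq))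
  have hprod : t ^ (∑ x, (μ ((H (σ x)).1 + 1) - μ ((I x).1 + 1))) ∣ ∏ x, Q (I x) (H (σ x)) := by
    rw [← Finset.prod_pow_eq_pow_sum]
    exact Finset.prod_dvd_prod_of_dvd _ _ fun x _ => hQ _ _
  calc ord t (W.submatrix I J₀).det
      ≤ ord t (W.submatrix L J₀).det + (wt r μ L - wt r μ I : ℕ) :=
        hW.ord_det_submatrix_le_add_wt hμ hn hI hL (lastCols_strictMono_s18 hn)
          fun _ => min_le_left _ _
    _ ≤ ord t (W.submatrix H J₀).det + (wt r μ L - wt r μ I : ℕ) := by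
        gcongr
        exact hW.ord_det_submatrix_le_of_le hn hL hH (lastCols_strictMono_s18 hn)
          fun _ => min_le_right _ _
    _ ≤ ord t ((W * C).submatrix H J₀).det
          + (∑ x, (μ ((H (σ x)).1 + 1) - μ ((I x).1 + 1)) : ℕ) := by
        gcongr ?_ + ?_
        · exact hW.ord_det_submatrix_lastCols_le_mul_right hn C hH
        · rw [wt_min_sub_wt hμ]
          exact_mod_cast sum_tsub_le_sum_comp_perm_tsub (hμ.comp_monotone hH.monotone)
            (hμ.comp_monotone hI.monotone) σ
    _ ≤ ord t (∏ x, Q (I x) (H (σ x))) + ord t ((W * C).submatrix H J₀).det := by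
        rw [add_comm]
        gcongr
        exact le_emultiplicity_of_pow_dvd hprod
    _ ≤ _ := ord_add_ord_le_ord_mul _ _ _

end MuGeneric

lemma Matrix.inv_mul_eq_mul_inv_of_mul_eq {R m : Type*} [CommRing R] [Fintype m] [DecidableEq m]
    {A B X Y : Matrix m m R} (hA : IsUnit A.det) (hB : IsUnit B.det) (h : A * X = Y * B) :
    A⁻¹ * Y = X * B⁻¹ :=
  calc A⁻¹ * Y = A⁻¹ * (Y * B) * B⁻¹ := by
        rw [mul_assoc, mul_assoc Y, B.mul_nonsing_inv hB, mul_one]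
    _ = X * B⁻¹ := by rw [← h, ← mul_assoc, A.nonsing_inv_mul hA, one_mul]

lemma PairEquiv.symm {R : Type*} [CommRing R] {r : ℕ} {M N M' N' : Matrix (Fin r) (Fin r) R}
    (h : PairEquiv M N M' N') : PairEquiv M' N' M N := by
  obtain ⟨P, Q, T, hP, hQ, hT, hPQ, hQT⟩ := h
  exact ⟨P⁻¹, Q⁻¹, T⁻¹, Matrix.isUnit_nonsing_inv_det P hP, Matrix.isUnit_nonsing_inv_det Q hQ,
    Matrix.isUnit_nonsing_inv_det T hT, Matrix.inv_mul_eq_mul_inv_of_mul_eq hP hQ hPQ,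
    Matrix.inv_mul_eq_mul_inv_of_mul_eq hQ hT hQT⟩

lemma pow_dvd_apply_of_dmu_mul_eq {R : Type*} [CommRing R] [IsDomain R] {t : R} (ht : t ≠ 0)
    {r : ℕ} {μ : ℕ → ℕ} {P Q : Matrix (Fin r) (Fin r) R} (hPQ : Dmu t r μ * Q = P * Dmu t r μ)
    (i j : Fin r) : t ^ (μ (j.1 + 1) - μ (i.1 + 1)) ∣ Q i j := by
  have hij := congrFun (congrFun hPQ i) j
  simp only [Dmu, Matrix.diagonal_mul, Matrix.mul_diagonal] at hij
  rcases le_total (μ (j.1 + 1)) (μ (i.1 + 1)) with hle | hle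
  · simp [Nat.sub_eq_zero_of_le hle]
  · refine ⟨P i j, mul_left_cancel₀ (pow_ne_zero (μ (i.1 + 1)) ht) ?_⟩
    obtain ⟨d, hd⟩ := Nat.exists_eq_add_of_le hle
    rw [hij, hd, Nat.add_sub_cancel_left, pow_add]
    ring

section Invariance

variable {R : Type*} [CommRing R] [IsDomain R] {t : R} {r : ℕ} {μ : ℕ → ℕ}
  {W W' : Matrix (Fin r) (Fin r) R}

lemma MuGeneric.ord_det_submatrix_lastCols_le_of_pairEquiv (ht : t ≠ 0)
    (hμ : Antitone fun s : Fin r => μ (s.1 + 1)) (hW : MuGeneric t r μ W)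
    (hpe : PairEquiv (Dmu t r μ) W (Dmu t r μ) W') {n : ℕ} (hn : n ≤ r) {I : Fin n → Fin r}
    (hI : StrictMono I) :
    ord t (W.submatrix I (lastCols r n hn)).det ≤ ord t (W'.submatrix I (lastCols r n hn)).det := by
  obtain ⟨P, Q, T, -, -, hT, hPQ, hQT⟩ := hpe
  have hW' : W' = Q * W * T⁻¹ := by rw [hQT, mul_assoc, T.mul_nonsing_inv hT, mul_one]
  rw [hW']
  exact hW.ord_det_submatrix_lastCols_le_mul hμ hn (pow_dvd_apply_of_dmu_mul_eq ht hPQ.symm) _ hI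

lemma dMinorZ_eq_of_pairEquiv (ht : t ≠ 0) (hμ : Antitone fun s : Fin r => μ (s.1 + 1))
    (hW : MuGeneric t r μ W) (hW' : MuGeneric t r μ W')
    (hpe : PairEquiv (Dmu t r μ) W (Dmu t r μ) W') (a b : ℕ) :
    dMinorZ t W a b = dMinorZ t W' a b := by
  have hrows := ((rowsSet r a b).orderEmbOfFin rfl).strictMono
  have hcard : (rowsSet r a b).card ≤ r := by simpa using (rowsSet r a b).card_le_univ
  exact congrArg _ (multiplicity_eq_of_emultiplicity_eq (le_antisymm
    (hW.ord_det_submatrix_lastCols_le_of_pairEquiv ht hμ hpe hcard hrows)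
    (hW'.ord_det_submatrix_lastCols_le_of_pairEquiv ht hμ hpe.symm hcard hrows)))

end Invariance

lemma DetFormula.apply_eq_of_dMinorZ_eq {R : Type*} [CommRing R] {t : R} {r : ℕ}
    {W W' : Matrix (Fin r) (Fin r) R} {k k' : ℕ → ℕ → ℤ} (hk : DetFormula t W k)
    (hk' : DetFormula t W' k') (hd : ∀ a b, dMinorZ t W a b = dMinorZ t W' a b) {i j : ℕ}
    (hi : 1 ≤ i) (hij : i ≤ j) (hj : j ≤ r) : k i j = k' i j := by
  have hsum : ∀ m, 1 ≤ m → m ≤ j → ∑ s ∈ Finset.Icc 1 m, k s j = ∑ s ∈ Finset.Icc 1 m, k' s j :=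
    fun m hm hmj => by rw [hk m j hm hmj hj, hk' m j hm hmj hj, hd, hd]
  obtain ⟨i, rfl⟩ : ∃ i', i = i' + 1 := ⟨i - 1, by omega⟩
  have hprev : ∑ s ∈ Finset.Icc 1 i, k s j = ∑ s ∈ Finset.Icc 1 i, k' s j := by
    rcases Nat.eq_zero_or_pos i with rfl | hpos
    · simp
    · exact hsum i hpos (by omega)
  have hlast := hsum (i + 1) hi hij
  rw [Finset.sum_Icc_succ_top (by omega), Finset.sum_Icc_succ_top (by omega), hprev] at hlast
  exact add_left_cancel hlast

theorem stmt18_general {R : Type*} [CommRing R] [IsDomain R]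
    (t : R) (ht : Irreducible t) (r : ℕ) (μ : ℕ → ℕ)
    (hμ : ∀ i, 1 ≤ i → i < r → μ (i + 1) ≤ μ i)
    (Nstar Nhat : Matrix (Fin r) (Fin r) R)
    (h1 : MuGeneric t r μ Nstar) (h2 : MuGeneric t r μ Nhat)
    (hpe : PairEquiv (Dmu t r μ) Nstar (Dmu t r μ) Nhat)
    (k k' : ℕ → ℕ → ℤ) (hk : DetFormula t Nstar k) (hk' : DetFormula t Nhat k')
    (i j : ℕ) (hi1 : 1 ≤ i) (hij : i ≤ j) (hjr : j ≤ r) :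
    k i j = k' i j :=
  hk.apply_eq_of_dMinorZ_eq hk'
    (dMinorZ_eq_of_pairEquiv ht.ne_zero (antitone_fin_of_succ_le hμ) h1 h2 hpe) hi1 hij hjr

theorem stmt18 {R : Type*} [CommRing R] [IsDomain R] [IsDiscreteValuationRing R]
    [CharZero (IsLocalRing.ResidueField R)]
    (t : R) (ht : Irreducible t) (r : ℕ) (μ : ℕ → ℕ)
    (hμ : ∀ i, 1 ≤ i → i < r → μ (i + 1) ≤ μ i)
    (Nstar Nhat : Matrix (Fin r) (Fin r) R)
    (h1 : MuGeneric t r μ Nstar) (h2 : MuGeneric t r μ Nhat)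
    (hpe : PairEquiv (Dmu t r μ) Nstar (Dmu t r μ) Nhat)
    (k k' : ℕ → ℕ → ℤ) (hk : DetFormula t Nstar k) (hk' : DetFormula t Nhat k')
    (i j : ℕ) (hi1 : 1 ≤ i) (hij : i ≤ j) (hjr : j ≤ r) :
    k i j = k' i j :=
  stmt18_general t ht r μ hμ Nstar Nhat h1 h2 hpe k k' hk hk' i j hi1 hij hjr
end
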